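/- Every d-dimensional alcoved polytope in ℝ^d that contains the origin in its interior contains the polytope Q_d. Consequently, Q_d is the unique alcoved polytope of minimal volume among all d-dimensional alcoved polytopes containing the origin in their interior. -/

import Mathlib

open scoped BigOperators Pointwise

/-- A point of `ℝ^d` is a *lattice point* if all its coordinates are integers. -/
def IsLatticePt {d : ℕ} (x : Fin d → ℝ) : Prop := ∀ i, ∃ n : ℤ, x i = (n : ℝ)

/-- A *polytope* in `ℝ^d` is the convex hull of a finite point set. -/
def IsPolytope {d : ℕ} (P : Set (Fin d → ℝ)) : Prop :=
  ∃ V : Finset (Fin d → ℝ), P = convexHull ℝ (V : Set (Fin d → ℝ))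

/-- A *lattice polytope* in `ℝ^d`: the convex hull of finitely many lattice points. -/
def IsLatticePolytope {d : ℕ} (P : Set (Fin d → ℝ)) : Prop :=
  ∃ V : Finset (Fin d → ℝ), (∀ v ∈ V, IsLatticePt v) ∧ P = convexHull ℝ (V : Set (Fin d → ℝ))

/-- Full-dimensional (`d`-dimensional) subset of `ℝ^d`: nonempty interior. -/
def IsFullDim {d : ℕ} (P : Set (Fin d → ℝ)) : Prop := (interior P).Nonempty

/-- `F` is a *facet* of the (full-dimensional) polytope `P` : the intersection of `P`
with a supporting hyperplane, of affine dimension `d - 1`. -/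
def IsFacet {d : ℕ} (P F : Set (Fin d → ℝ)) : Prop :=
  ∃ (a : Fin d → ℝ) (c : ℝ), a ≠ 0 ∧ (∀ x ∈ P, (∑ i, a i * x i) ≤ c) ∧
    F = {x ∈ P | (∑ i, a i * x i) = c} ∧
    Module.finrank ℝ (affineSpan ℝ F).direction = d - 1

/-- Extend `y ∈ ℝ^d` to `Fin (d+1)` by the convention `y₀ = 0`. -/
def extCoord {d : ℕ} (y : Fin d → ℝ) : Fin (d + 1) → ℝ := Fin.cons 0 y

/-- An *alcove hyperplane* in `ℝ^d`: `{y : y_i - y_j = k}` for integer `k` and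
indices `i j ∈ {0, 1, …, d}`, with the convention `y₀ = 0`. -/
def IsAlcoveHyperplane {d : ℕ} (H : Set (Fin d → ℝ)) : Prop :=
  ∃ (i j : Fin (d + 1)) (k : ℤ), i ≠ j ∧
    H = {y : Fin d → ℝ | extCoord y i - extCoord y j = (k : ℝ)}

/-- A `d`-dimensional polytope in `ℝ^d` is an *alcoved polytope* if all of its
facet-defining hyperplanes are alcove hyperplanes. -/
def IsAlcovedPolytope {d : ℕ} (P : Set (Fin d → ℝ)) : Prop :=
  IsPolytope P ∧ IsFullDim P ∧
    ∀ F, IsFacet P F → ∃ H, IsAlcoveHyperplane H ∧ F ⊆ H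

/-- The set of interior lattice points of `P`, as points of `ℤ^d`. -/
def interiorLatticePts {d : ℕ} (P : Set (Fin d → ℝ)) : Set (Fin d → ℤ) :=
  {p | (fun i => (p i : ℝ)) ∈ interior P}

/-- Lattice distance between the hyperplane `{x | a·x = b}` (with `a ∈ ℤ^d`, `b ∈ ℤ`)
and a lattice point `p`: it is `0` if `p` lies on the hyperplane and otherwise `n + 1`,
where `n` is the number of parallel translates of the hyperplane through lattice points
strictly between `p` and the hyperplane. -/
noncomputable def latticeDistAux {d : ℕ} (a : Fin d → ℤ) (b : ℤ) (p : Fin d → ℤ) : ℕ :=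
  if (∑ i, a i * p i) = b then 0
  else Nat.card {c : ℤ // (∃ q : Fin d → ℤ, (∑ i, a i * q i) = c) ∧
      min (∑ i, a i * p i) b < c ∧ c < max (∑ i, a i * p i) b} + 1

/-- Lattice distance between a rational hyperplane `H ⊆ ℝ^d` (given as a set) and a
lattice point `p`. -/
noncomputable def hyperplaneLatticeDist {d : ℕ} (H : Set (Fin d → ℝ)) (p : Fin d → ℤ) : ℕ :=
  sInf {n : ℕ | ∃ (a : Fin d → ℤ) (b : ℤ), a ≠ 0 ∧
    H = {x : Fin d → ℝ | (∑ i, (a i : ℝ) * x i) = (b : ℝ)} ∧ n = latticeDistAux a b p}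

/-- Lattice distance of a facet `F` to a set `S` of lattice points: the minimum over
`p ∈ S` of the lattice distance between `aff F` and `p`. -/
noncomputable def facetLatticeDistSet {d : ℕ} (F : Set (Fin d → ℝ)) (S : Set (Fin d → ℤ)) : ℕ :=
  sInf {n : ℕ | ∃ p ∈ S, hyperplaneLatticeDist ((affineSpan ℝ F : AffineSubspace ℝ (Fin d → ℝ)) : Set (Fin d → ℝ)) p = n}

/-- Number of lattice points in the `t`-th dilate of `P`. -/
noncomputable def latCount {d : ℕ} (P : Set (Fin d → ℝ)) (t : ℕ) : ℕ :=
  Nat.card {p : Fin d → ℤ // (fun i => (p i : ℝ)) ∈ (t : ℝ) • P}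

/-- `h` is the `h^*`-vector of the `d`-dimensional lattice polytope `P ⊆ ℝ^d`:
the (unique) coefficient vector with
`Ehr_P(z) = (h₀ + h₁ z + … + h_d z^d)/(1-z)^{d+1}`, expressed equivalently by
`L_P(t) = ∑ i, h_i * C(t + d - i, d)` for all `t ≥ 1`. -/
def IsHStarVector {d : ℕ} (P : Set (Fin d → ℝ)) (h : Fin (d + 1) → ℤ) : Prop :=
  ∀ t : ℕ, 1 ≤ t →
    (latCount P t : ℤ) = ∑ i : Fin (d + 1), h i * (Nat.choose (t + d - (i : ℕ)) d : ℤ)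

/-- A finite sequence is *unimodal* if it first weakly increases, then weakly decreases. -/
def Unimodal {n : ℕ} (s : Fin n → ℤ) : Prop :=
  ∃ k : Fin n, (∀ i j : Fin n, i ≤ j → j ≤ k → s i ≤ s j) ∧
    (∀ i j : Fin n, k ≤ i → i ≤ j → s j ≤ s i)

/-- `K` is a triangulation of the lattice polytope `P`, i.e. a triangulation of the
point configuration `P ∩ ℤ^d`: a simplicial complex with vertices among the lattice
points of `P` covering `P`. -/
def IsTriangulationOf {d : ℕ} (K : Geometry.SimplicialComplex ℝ (Fin d → ℝ))
    (P : Set (Fin d → ℝ)) : Prop :=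
  K.space = P ∧ ∀ s ∈ K.faces, ∀ x ∈ s, x ∈ P ∧ IsLatticePt x

/-- The lattice `ℤ^d` inside `ℝ^d`, as a `ℤ`-submodule. -/
def latticeSubmodule (d : ℕ) : Submodule ℤ (Fin d → ℝ) :=
  Submodule.span ℤ (Set.range fun i : Fin d => (Pi.single i 1 : Fin d → ℝ))

/-- A full-dimensional lattice simplex (given by its vertex set `s`, `|s| = d+1`) is
*unimodular* if the differences of its vertices with one of them form a `ℤ`-basis of
`ℤ^d`, i.e. they span the lattice `ℤ^d` over `ℤ`. -/
def IsUnimodularSimplex {d : ℕ} (s : Finset (Fin d → ℝ)) : Prop :=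
  s.card = d + 1 ∧ (∀ x ∈ s, IsLatticePt x) ∧
    ∃ v ∈ s, Submodule.span ℤ ((fun x => x - v) '' (s : Set (Fin d → ℝ))) = latticeSubmodule d

/-- A *unimodular triangulation* of `P`: all full-dimensional simplices are unimodular. -/
def IsUnimodularTriangulation {d : ℕ} (K : Geometry.SimplicialComplex ℝ (Fin d → ℝ))
    (P : Set (Fin d → ℝ)) : Prop :=
  IsTriangulationOf K P ∧ ∀ s ∈ K.faces, s.card = d + 1 → IsUnimodularSimplex s

/-- The subcomplex of `K` induced on the boundary lattice points `(∂P) ∩ ℤ^d`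
(i.e. all faces of `K` whose vertices lie in `∂P`) is a triangulation of `∂P`,
i.e. it covers `∂P`. -/
def BoundaryInducedIsTriangulation {d : ℕ} (K : Geometry.SimplicialComplex ℝ (Fin d → ℝ))
    (P : Set (Fin d → ℝ)) : Prop :=
  (⋃ s ∈ {s ∈ K.faces | ∀ x ∈ s, x ∈ frontier P},
      convexHull ℝ (s : Set (Fin d → ℝ))) = frontier P

/-- `K` is a *regular* triangulation of `P`: there is a height function `w` on the
lattice points of `P` whose lower convex hull projects to `K`; equivalently every face
of `K` is the domain of equality of an affine functional lying strictly below the lift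
of all other lattice points of `P`. -/
def IsRegularTriangulation {d : ℕ} (K : Geometry.SimplicialComplex ℝ (Fin d → ℝ))
    (P : Set (Fin d → ℝ)) : Prop :=
  ∃ w : (Fin d → ℝ) → ℝ, ∀ s ∈ K.faces,
    ∃ ℓ : (Fin d → ℝ) →ᵃ[ℝ] ℝ, (∀ x ∈ s, ℓ x = w x) ∧
      ∀ x : Fin d → ℝ, IsLatticePt x → x ∈ P → x ∉ s → ℓ x < w x

/-- The union of all alcove hyperplanes in `ℝ^d`. -/
def alcoveUnion (d : ℕ) : Set (Fin d → ℝ) := {y | ∃ H, IsAlcoveHyperplane H ∧ y ∈ H}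

/-- The polytope `Q_d = {y ∈ ℝ^d : y_i - y_j ≤ 1 for all 0 ≤ i, j ≤ d}` (with `y₀ = 0`),
the minimal-volume alcoved polytope with the origin in its interior. -/
def Qd (d : ℕ) : Set (Fin d → ℝ) :=
  {y | ∀ i j : Fin (d + 1), extCoord y i - extCoord y j ≤ 1}

/-!
If `x ∉ P`, separating `x` from `P` and applying Krein–Milman to the (compact) polar
`P° = {a | a ⬝ᵥ v ≤ 1 on P}` yields a vertex `a` of `P°` with `a ⬝ᵥ x > 1`. The points of `P`
where `a ⬝ᵥ · = 1` span `ℝ^d` (otherwise `a` could be moved in both directions inside `P°`), so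
`{a ⬝ᵥ · = 1}` cuts out a facet of `P`. That facet lies in an alcove hyperplane `y_i - y_j = k`,
and since its points span, `y_i - y_j = k (a ⬝ᵥ y)` for every `y`, with `k` a nonzero integer.
On `Q_d` we have `|y_i - y_j| ≤ 1`, hence `a ⬝ᵥ y ≤ 1`, so `x ∉ Q_d`.

For the volumes: `Q_d` is closed and bounded, so if `Q_d ⊆ P` have equal volume then the open set
`interior P \ Q_d` is null, hence empty, and `P ⊆ closure (interior P) ⊆ Q_d`.
-/

open Matrix Set Topology MeasureTheory

theorem IsCompact.subset_of_extremePoints_subset {E : Type*} [AddCommGroup E] [Module ℝ E]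
    [TopologicalSpace E] [T2Space E] [IsTopologicalAddGroup E] [ContinuousSMul ℝ E]
    [LocallyConvexSpace ℝ E] {K H : Set E} (hK : IsCompact K) (hKc : Convex ℝ K)
    (hH : Convex ℝ H) (hHc : IsClosed H) (h : K.extremePoints ℝ ⊆ H) : K ⊆ H := by
  rw [← closure_convexHull_extremePoints hK hKc]
  exact closure_minimal (convexHull_min h hH) hHc

theorem Convex.subset_of_measure_eq {E : Type*} [NormedAddCommGroup E] [NormedSpace ℝ E]
    [MeasurableSpace E] [OpensMeasurableSpace E] (μ : Measure E) [μ.IsOpenPosMeasure]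
    {P Q : Set E} (hP : Convex ℝ P) (hPint : (interior P).Nonempty) (hQ : IsClosed Q)
    (hQfin : μ Q ≠ ⊤) (hQP : Q ⊆ P) (h : μ P = μ Q) : P ⊆ Q := by
  have hnull : μ (interior P \ Q) = 0 :=
    measure_mono_null (sdiff_subset_sdiff_left interior_subset) (by
      rw [measure_sdiff hQP hQ.measurableSet.nullMeasurableSet hQfin, h, tsub_self])
  have hint : interior P ⊆ Q := by
    simpa [sdiff_eq_empty] using ((isOpen_interior.sdiff hQ).measure_eq_zero_iff μ).1 hnull
  calc P ⊆ closure P := subset_closure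
    _ = closure (interior P) := (hP.closure_interior_eq_closure_of_nonempty_interior hPint).symm
    _ ⊆ Q := closure_minimal hint hQ

section Polar

variable {ι : Type*} [Fintype ι]

def polarSet (S : Set (ι → ℝ)) : Set (ι → ℝ) := {a | ∀ v ∈ S, a ⬝ᵥ v ≤ 1}

lemma convex_polarSet (S : Set (ι → ℝ)) : Convex ℝ (polarSet S) := by
  intro a ha b hb s t hs ht hst v hv
  simp only [add_dotProduct, smul_dotProduct, smul_eq_mul]
  nlinarith [ha v hv, hb v hv]

lemma isClosed_polarSet (S : Set (ι → ℝ)) : IsClosed (polarSet S) := by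
  have : polarSet S = ⋂ v ∈ S, {a | a ⬝ᵥ v ≤ 1} := by ext; simp [polarSet]
  rw [this]
  exact isClosed_biInter fun v _ =>
    isClosed_le (continuous_id.dotProduct continuous_const) continuous_const

lemma polarSet_convexHull (S : Set (ι → ℝ)) : polarSet (convexHull ℝ S) = polarSet S := by
  refine subset_antisymm (fun a ha v hv => ha v (subset_convexHull ℝ S hv)) fun a ha =>
    convexHull_min ha (convex_halfSpace_le (dotProductBilin ℝ ℝ a).isLinear 1)

lemma isBounded_polarSet {S : Set (ι → ℝ)} (h0 : (0 : ι → ℝ) ∈ interior S) :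
    Bornology.IsBounded (polarSet S) := by
  classical
  obtain ⟨ε, hε, hball⟩ := Metric.mem_nhds_iff.1 (mem_interior_iff_mem_nhds.1 h0)
  refine (Metric.isBounded_closedBall (x := 0) (r := 2 / ε)).subset fun a ha => ?_
  rw [mem_closedBall_zero_iff, pi_norm_le_iff_of_nonneg (by positivity)]
  intro i
  have key : ∀ t : ℝ, |t| < ε → a i * t ≤ 1 := fun t ht => by
    simpa [dotProduct_single] using
      ha (Pi.single i t) (hball (by simpa [Pi.norm_single] using ht))
  have h₁ := key (ε / 2) (by rw [abs_of_pos (by positivity)]; linarith)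
  have h₂ := key (-(ε / 2)) (by rw [abs_neg, abs_of_pos (by positivity)]; linarith)
  rw [Real.norm_eq_abs, le_div_iff₀ hε]
  cases abs_cases (a i) <;> nlinarith

lemma isCompact_polarSet {S : Set (ι → ℝ)} (h0 : (0 : ι → ℝ) ∈ interior S) :
    IsCompact (polarSet S) :=
  Metric.isCompact_of_isClosed_isBounded (isClosed_polarSet S) (isBounded_polarSet h0)

lemma dotProduct_dotProductEquiv_symm [DecidableEq ι] (f : Module.Dual ℝ (ι → ℝ))
    (y : ι → ℝ) : (dotProductEquiv ℝ ι).symm f ⬝ᵥ y = f y := by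
  rw [← dotProductEquiv_apply_apply, LinearEquiv.apply_symm_apply]

lemma exists_mem_polarSet_one_lt {S : Set (ι → ℝ)} (hS : Convex ℝ S) (hSc : IsClosed S)
    (h0 : (0 : ι → ℝ) ∈ S) {x : ι → ℝ} (hx : x ∉ S) : ∃ a ∈ polarSet S, 1 < a ⬝ᵥ x := by
  classical
  obtain ⟨f, u, hfS, hfx⟩ := geometric_hahn_banach_closed_point hS hSc hx
  have hu : 0 < u := by simpa using hfS 0 h0
  have hdot (y : ι → ℝ) : (u⁻¹ • (dotProductEquiv ℝ ι).symm f.toLinearMap) ⬝ᵥ y = f y / u := by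
    rw [smul_dotProduct, dotProduct_dotProductEquiv_symm, smul_eq_mul, inv_mul_eq_div]; rfl
  refine ⟨u⁻¹ • (dotProductEquiv ℝ ι).symm f.toLinearMap, fun v hv => ?_, ?_⟩
  · rw [hdot, div_le_one hu]; exact (hfS v hv).le
  · rwa [hdot, one_lt_div hu]

lemma span_eq_top_of_mem_extremePoints_polarSet (V : Finset (ι → ℝ)) {a : ι → ℝ}
    (ha : a ∈ (polarSet (V : Set (ι → ℝ))).extremePoints ℝ) :
    Submodule.span ℝ {v | v ∈ V ∧ a ⬝ᵥ v = 1} = ⊤ := by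
  classical
  by_contra hT
  obtain ⟨f, hf0, hfT⟩ :=
    Submodule.exists_dual_map_eq_bot_of_lt_top (lt_top_iff_ne_top.2 hT) inferInstance
  set b := (dotProductEquiv ℝ ι).symm f
  have hb0 : b ≠ 0 := by simpa [b] using hf0
  have hbT : ∀ v ∈ V, a ⬝ᵥ v = 1 → b ⬝ᵥ v = 0 := fun v hv hav => by
    rw [dotProduct_dotProductEquiv_symm, ← Submodule.mem_bot ℝ, ← hfT]
    exact Submodule.mem_map_of_mem (Submodule.subset_span ⟨hv, hav⟩)
  -- The active constraints are untouched by moving along `b`, the others have slack.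
  have hpert : ∀ᶠ s in 𝓝 (0 : ℝ), a + s • b ∈ polarSet (V : Set (ι → ℝ)) := by
    refine (V.eventually_all.2 fun v hv => ?_).mono fun s hs v hv => hs v hv
    simp only [add_dotProduct, smul_dotProduct, smul_eq_mul]
    rcases (ha.1 v hv).eq_or_lt with hav | hav
    · exact .of_forall fun s => by rw [hav, hbT v hv hav, mul_zero, add_zero]
    · exact (ContinuousAt.eventually_lt (by fun_prop) continuousAt_const
        (by simpa using hav)).mono fun _ => le_of_lt
  obtain ⟨δ, hδ, hball⟩ := Metric.eventually_nhds_iff.1 hpert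
  have hmem (s : ℝ) (hs : |s| = δ / 2) : a + s • b ∈ polarSet (V : Set (ι → ℝ)) :=
    hball (by rw [Real.dist_0_eq_abs, hs]; linarith)
  have hmid : a ∈ openSegment ℝ (a + (δ / 2) • b) (a + (-(δ / 2)) • b) :=
    ⟨1 / 2, 1 / 2, by norm_num, by norm_num, by norm_num, by module⟩
  have hδb : (δ / 2) • b = 0 := by
    simpa using ha.2 (hmem _ (abs_of_pos (by positivity)))
      (hmem _ (by rw [abs_neg, abs_of_pos (by positivity)])) hmid
  exact hb0 ((smul_eq_zero.1 hδb).resolve_left (by positivity))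

lemma exists_mem_extremePoints_polarSet_one_lt (V : Finset (ι → ℝ))
    (h0 : (0 : ι → ℝ) ∈ interior (convexHull ℝ (V : Set (ι → ℝ)))) {x : ι → ℝ}
    (hx : x ∉ convexHull ℝ (V : Set (ι → ℝ))) :
    ∃ a ∈ (polarSet (V : Set (ι → ℝ))).extremePoints ℝ, 1 < a ⬝ᵥ x := by
  obtain ⟨a₀, ha₀, hx₀⟩ := exists_mem_polarSet_one_lt (convex_convexHull ℝ _)
    (V.finite_toSet.isClosed_convexHull ℝ) (interior_subset h0) hx
  rw [polarSet_convexHull] at ha₀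
  by_contra! h
  have hK := isCompact_polarSet h0
  rw [polarSet_convexHull] at hK
  have hsub := hK.subset_of_extremePoints_subset (convex_polarSet _) (convex_polarSet {x})
    (isClosed_polarSet {x}) fun a ha => by simpa [polarSet] using h a ha
  exact (hsub ha₀ x rfl).not_gt hx₀

end Polar

section Alcoved

variable {d : ℕ}

lemma isFacet_of_span_eq_top {P T : Set (Fin d → ℝ)} {a : Fin d → ℝ} (ha : a ≠ 0)
    (haP : a ∈ polarSet P) (hTP : T ⊆ P) (hT : ∀ v ∈ T, a ⬝ᵥ v = 1)
    (hspan : Submodule.span ℝ T = ⊤) : IsFacet P {z ∈ P | a ⬝ᵥ z = 1} := by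
  refine ⟨a, 1, ha, haP, rfl, ?_⟩
  set ℓ := dotProductEquiv ℝ (Fin d) a
  have hℓ : ℓ ≠ 0 := by simpa [ℓ] using ha
  have hker := ℓ.finrank_ker_add_one_of_ne_zero hℓ
  rw [Module.finrank_fin_fun] at hker
  have hupper : vectorSpan ℝ {z ∈ P | a ⬝ᵥ z = 1} ≤ LinearMap.ker ℓ := by
    rw [vectorSpan_def, Submodule.span_le]
    rintro _ ⟨z, hz, w, hw, rfl⟩
    simp [ℓ, dotProduct_sub, hz.2, hw.2]
  have hlower : d ≤ Module.finrank ℝ (vectorSpan ℝ T) + 1 := by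
    have hins : vectorSpan ℝ (insert 0 T) = Submodule.span ℝ T := by
      simp [vectorSpan_eq_span_vsub_set_right ℝ (mem_insert 0 T)]
    have := finrank_vectorSpan_insert_le_set ℝ T 0
    rwa [hins, hspan, finrank_top, Module.finrank_fin_fun] at this
  have hmono := Submodule.finrank_mono (vectorSpan_mono ℝ fun v hv => ⟨hTP hv, hT v hv⟩ :
    vectorSpan ℝ T ≤ vectorSpan ℝ {z ∈ P | a ⬝ᵥ z = 1})
  have := Submodule.finrank_mono hupper
  rw [direction_affineSpan]
  omega

def extCoordForm (i : Fin (d + 1)) : Module.Dual ℝ (Fin d → ℝ) :=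
  (Fin.cons 0 LinearMap.proj : Fin (d + 1) → Module.Dual ℝ (Fin d → ℝ)) i

@[simp]
lemma extCoordForm_apply (i : Fin (d + 1)) (y : Fin d → ℝ) : extCoordForm i y = extCoord y i := by
  cases i using Fin.cases <;> simp [extCoordForm, extCoord]

lemma exists_extCoord_sub_eq_one {i j : Fin (d + 1)} (hij : i ≠ j) :
    ∃ y : Fin d → ℝ, extCoord y i - extCoord y j = 1 := by
  classical
  cases j using Fin.cases with
  | zero =>
    obtain ⟨i, rfl⟩ := Fin.eq_succ_of_ne_zero hij
    exact ⟨Pi.single i 1, by simp [extCoord]⟩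
  | succ j =>
    refine ⟨-Pi.single j 1, ?_⟩
    cases i using Fin.cases with
    | zero => simp [extCoord]
    | succ i =>
      have hij : i ≠ j := fun h => hij (h ▸ rfl)
      simp [extCoord, hij]

lemma extCoord_sub_eq_mul_dotProduct {T : Set (Fin d → ℝ)} (hspan : Submodule.span ℝ T = ⊤)
    {a : Fin d → ℝ} (hT : ∀ v ∈ T, a ⬝ᵥ v = 1) {i j : Fin (d + 1)} {k : ℝ}
    (hTk : ∀ v ∈ T, extCoord v i - extCoord v j = k) (y : Fin d → ℝ) :
    extCoord y i - extCoord y j = k * a ⬝ᵥ y := by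
  have key : extCoordForm i - extCoordForm j = k • dotProductEquiv ℝ (Fin d) a :=
    LinearMap.ext_on hspan fun v hv => by simp [hT v hv, hTk v hv]
  simpa using LinearMap.congr_fun key y

lemma dotProduct_le_one_of_mem_Qd {T : Set (Fin d → ℝ)} (hspan : Submodule.span ℝ T = ⊤)
    {a : Fin d → ℝ} (hT : ∀ v ∈ T, a ⬝ᵥ v = 1) {i j : Fin (d + 1)} (hij : i ≠ j) {k : ℤ}
    (hTk : ∀ v ∈ T, extCoord v i - extCoord v j = k) {x : Fin d → ℝ} (hx : x ∈ Qd d) :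
    a ⬝ᵥ x ≤ 1 := by
  have hform := extCoord_sub_eq_mul_dotProduct hspan hT hTk
  obtain ⟨y, hy⟩ := exists_extCoord_sub_eq_one hij
  have hk : (1 : ℝ) ≤ |(k : ℝ)| := by
    have hk0 : k ≠ 0 := by rintro rfl; simp [hform] at hy
    exact_mod_cast Int.one_le_abs hk0
  have hxij : extCoord x i - extCoord x j ≤ 1 := hx i j
  have hxji : extCoord x j - extCoord x i ≤ 1 := hx j i
  have hkx : |(k : ℝ) * a ⬝ᵥ x| ≤ 1 := by
    rw [← hform, abs_le]
    constructor <;> linarith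
  rw [abs_mul] at hkx
  nlinarith [le_abs_self (a ⬝ᵥ x), abs_nonneg (a ⬝ᵥ x)]

lemma isClosed_Qd : IsClosed (Qd d) := by
  simp only [Qd, ofPred_forall]
  refine isClosed_iInter fun i => isClosed_iInter fun j => isClosed_le ?_ continuous_const
  exact (extCoordForm (d := d) i - extCoordForm j).continuous_of_finiteDimensional.congr
    fun y => by simp

lemma Qd_subset_closedBall : Qd d ⊆ Metric.closedBall 0 1 := by
  intro y hy
  rw [mem_closedBall_zero_iff, pi_norm_le_iff_of_nonneg zero_le_one]
  intro m
  have h₁ := hy m.succ 0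
  have h₂ := hy 0 m.succ
  simp only [extCoord, Fin.cons_succ, Fin.cons_zero] at h₁ h₂
  rw [Real.norm_eq_abs, abs_le]
  constructor <;> linarith

lemma volume_Qd_ne_top : volume (Qd d) ≠ ⊤ :=
  (measure_mono Qd_subset_closedBall).trans_lt measure_closedBall_lt_top |>.ne

theorem Qd_subset_of_isAlcovedPolytope {P : Set (Fin d → ℝ)} (hP : IsAlcovedPolytope P)
    (h0 : (0 : Fin d → ℝ) ∈ interior P) : Qd d ⊆ P := by
  obtain ⟨⟨V, rfl⟩, -, hfacets⟩ := hP
  intro x hxQ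
  by_contra hx
  obtain ⟨a, ha, hax⟩ := exists_mem_extremePoints_polarSet_one_lt V h0 hx
  set T := {v | v ∈ V ∧ a ⬝ᵥ v = 1}
  have hTP : T ⊆ convexHull ℝ V := fun v hv => subset_convexHull ℝ _ hv.1
  have ha0 : a ≠ 0 := by rintro rfl; norm_num at hax
  have haP : a ∈ polarSet (convexHull ℝ V) := by
    rw [polarSet_convexHull]; exact ha.1
  have hspan := span_eq_top_of_mem_extremePoints_polarSet V ha
  obtain ⟨H, ⟨i, j, k, hij, rfl⟩, hFH⟩ :=
    hfacets _ (isFacet_of_span_eq_top ha0 haP hTP (fun v hv => hv.2) hspan)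
  exact (dotProduct_le_one_of_mem_Qd hspan (fun v hv => hv.2) hij
    (fun v hv => hFH ⟨hTP hv, hv.2⟩) hxQ).not_gt hax

end Alcoved

theorem stmt11_general (d : ℕ) (P : Set (Fin d → ℝ)) (hP : IsAlcovedPolytope P)
    (h0 : (0 : Fin d → ℝ) ∈ interior P) :
    Qd d ⊆ P ∧
    MeasureTheory.volume (Qd d) ≤ MeasureTheory.volume P ∧
    (MeasureTheory.volume P = MeasureTheory.volume (Qd d) → P = Qd d) := by
  have hQP : Qd d ⊆ P := Qd_subset_of_isAlcovedPolytope hP h0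
  refine ⟨hQP, measure_mono hQP, fun hvol => ?_⟩
  obtain ⟨⟨V, rfl⟩, -, -⟩ := hP
  exact ((convex_convexHull ℝ _).subset_of_measure_eq volume ⟨0, h0⟩ isClosed_Qd
    volume_Qd_ne_top hQP hvol).antisymm hQP

/-- Every `d`-dimensional alcoved polytope containing the origin in its
interior contains `Q_d`; consequently `Q_d` is the unique alcoved polytope of minimal
volume among all `d`-dimensional alcoved polytopes with the origin in their interior. -/
theorem stmt11 (d : ℕ) (hd : 1 ≤ d) (P : Set (Fin d → ℝ)) (hP : IsAlcovedPolytope P)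
    (h0 : (0 : Fin d → ℝ) ∈ interior P) :
    Qd d ⊆ P ∧
    MeasureTheory.volume (Qd d) ≤ MeasureTheory.volume P ∧
    (MeasureTheory.volume P = MeasureTheory.volume (Qd d) → P = Qd d) :=
  stmt11_general d P hP h0
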